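/- arXiv:2204.02077 — 6 statements merged into one kernel-verified Lean document; each statement's English description precedes it below -/
import Mathlib

section
/- The operator R_a on gl(n,ℝ) defined by R_a(X) = ½(X_> − X_<) solves the modified classical Yang–Baxter equation: [R_a(X), R_a(Y)] − R_a([R_a(X),Y] + [X,R_a(Y)]) = −¼[X,Y] for all X, Y ∈ gl(n,ℝ), where [·,·] is the matrix commutator. -/
open Matrix

noncomputable section

attribute [local instance] Matrix.frobeniusNormedAddCommGroup Matrix.frobeniusNormedSpace

/-- `gl n` is the space of real `n × n` matrices. -/
abbrev gl (n : ℕ) := Matrix (Fin n) (Fin n) ℝ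

variable {n : ℕ}

/-- The strictly upper triangular part `X_>`. -/
def upPart (X : gl n) : gl n := Matrix.of fun i j => if i < j then X i j else 0

/-- The diagonal part `X_0`. -/
def diagPart (X : gl n) : gl n := Matrix.of fun i j => if i = j then X i j else 0

/-- The strictly lower triangular part `X_<`. -/
def lowPart (X : gl n) : gl n := Matrix.of fun i j => if j < i then X i j else 0

/-- The trace form `⟨X,Y⟩ = tr(XY)`. -/
def trForm (X Y : gl n) : ℝ := (X * Y).trace

/-- `R(X) = ½(X_> + X_0 − X_<) + (X_<)ᵀ`. -/
def Rop (X : gl n) : gl n := (1/2 : ℝ) • (upPart X + diagPart X - lowPart X) + (lowPart X)ᵀ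

/-- `R_a(X) = ½(X_> − X_<)`, the anti-symmetric part of `R`. -/
def Ra (X : gl n) : gl n := (1/2 : ℝ) • (upPart X - lowPart X)

/-- `R_s(X) = ½X_0 + (X_<)ᵀ`, the symmetric part of `R`. -/
def Rs (X : gl n) : gl n := (1/2 : ℝ) • diagPart X + (lowPart X)ᵀ

/-- `r₊ = R_a + ½·id`. -/
def rPlus (X : gl n) : gl n := Ra X + (1/2 : ℝ) • X

/-- `r₋ = R_a − ½·id`. -/
def rMinus (X : gl n) : gl n := Ra X - (1/2 : ℝ) • X

/-- The skew-symmetric part `Z⁺ = ½(Z − Zᵀ)`. -/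
def skewPart (X : gl n) : gl n := (1/2 : ℝ) • (X - Xᵀ)

/-- The symmetric part `Z⁻ = ½(Z + Zᵀ)`. -/
def symPart (X : gl n) : gl n := (1/2 : ℝ) • (X + Xᵀ)

/-- `df` is the gradient of `f` with respect to the trace form:
`tr(df(L)·Y)` is the derivative of `f` at `L` in direction `Y`. -/
def IsGradient (f : gl n → ℝ) (df : gl n → gl n) : Prop :=
  ∀ L Y : gl n, HasDerivAt (fun t : ℝ => f (L + t • Y)) (trForm (df L) Y) 0

/-- `f : gl(n,ℝ) → ℝ` is smooth. -/
def SmoothG (f : gl n → ℝ) : Prop := ContDiff ℝ (⊤ : ℕ∞) f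

/-- The quadratic r-matrix bracket `{f,h}₂(L)`, expressed via the gradient
functions `df`, `dh` of `f` and `h`:
`⟨∇f, R_a∇h⟩ − ⟨∇'f, R_a∇'h⟩ + ⟨∇f, R_s∇'h⟩ − ⟨∇'f, R_s∇h⟩`
with `∇f = L·df(L)` and `∇'f = df(L)·L`. -/
def quadBr (df dh : gl n → gl n) (L : gl n) : ℝ :=
  trForm (L * df L) (Ra (L * dh L)) - trForm (df L * L) (Ra (dh L * L))
    + trForm (L * df L) (Rs (dh L * L)) - trForm (df L * L) (Rs (L * dh L))

/-- The linear r-matrix bracket `{f,h}₁(L) = ⟨L, [R df(L), dh(L)] + [df(L), R dh(L)]⟩`. -/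
def linBr (df dh : gl n → gl n) (L : gl n) : ℝ :=
  trForm L (⁅Rop (df L), dh L⁆ + ⁅df L, Rop (dh L)⁆)

/-- The Toda Hamiltonians `h_k(L) = (1/k)·tr(L^k)`. -/
def hamH (k : ℕ) (L : gl n) : ℝ := (1 / (k : ℝ)) * (L ^ k).trace

/-- `a` is an orthogonal matrix. -/
def IsOrth (a : gl n) : Prop := aᵀ * a = 1

/-- `b` belongs to `B`: upper triangular with strictly positive diagonal entries. -/
def InB (b : gl n) : Prop := b.BlockTriangular id ∧ ∀ i, 0 < b i i

/-- `F : 𝔐 → ℝ` is invariant under the action `(g,L) ↦ (a g b⁻¹, a L a⁻¹)`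
of `S = O(n,ℝ) × B` on `𝔐 = GL(n,ℝ) × gl(n,ℝ)`. -/
def SInvariant (F : gl n × gl n → ℝ) : Prop :=
  ∀ a b g L : gl n, IsOrth a → InB b → IsUnit g.det →
    F (a * g * b⁻¹, a * L * a⁻¹) = F (g, L)

/-- `F` is smooth on `𝔐 = GL(n,ℝ) × gl(n,ℝ)`. -/
def SmoothOnM (F : gl n × gl n → ℝ) : Prop :=
  ContDiffOn ℝ (⊤ : ℕ∞) F {p : gl n × gl n | IsUnit p.1.det}

/-- `N` is the left derivative `∇₁F`:
`⟨∇₁F(g,L), X⟩ = d/dt|₀ F(e^{tX} g, L)` for all `X`. -/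
def IsGrad1 (F : gl n × gl n → ℝ) (N : gl n × gl n → gl n) : Prop :=
  ∀ g L : gl n, IsUnit g.det → ∀ X : gl n,
    HasDerivAt (fun t : ℝ => F (NormedSpace.exp (t • X) * g, L)) (trForm (N (g, L)) X) 0

/-- `N` is the right derivative `∇₁'F`:
`⟨∇₁'F(g,L), X⟩ = d/dt|₀ F(g e^{tX}, L)` for all `X`. -/
def IsGrad1' (F : gl n × gl n → ℝ) (N : gl n × gl n → gl n) : Prop :=
  ∀ g L : gl n, IsUnit g.det → ∀ X : gl n,
    HasDerivAt (fun t : ℝ => F (g * NormedSpace.exp (t • X), L)) (trForm (N (g, L)) X) 0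

/-- `D` is the gradient `d₂F` of `F` in the second argument. -/
def IsGrad2 (F : gl n × gl n → ℝ) (D : gl n × gl n → gl n) : Prop :=
  ∀ g L : gl n, IsUnit g.det → ∀ Y : gl n,
    HasDerivAt (fun t : ℝ => F (g, L + t • Y)) (trForm (D (g, L)) Y) 0

/-- The quadratic bracket `{F,H}₂(g,L)` on `𝔐`, expressed through the derivative data
`nf = ∇₁F(g,L)`, `nf' = ∇₁'F(g,L)`, `d2f = d₂F(g,L)` and likewise for `H`:
`⟨R_a∇₁F, ∇₁H⟩ − ⟨R_a∇₁'F, ∇₁'H⟩ + ⟨∇₂F − ∇₂'F, r₊∇₂'H − r₋∇₂H⟩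
 + ⟨∇₁F, r₊∇₂'H − r₋∇₂H⟩ − ⟨∇₁H, r₊∇₂'F − r₋∇₂F⟩`. -/
def pb2 (nf nf' d2f nh nh' d2h L : gl n) : ℝ :=
  trForm (Ra nf) nh - trForm (Ra nf') nh'
    + trForm (L * d2f - d2f * L) (rPlus (d2h * L) - rMinus (L * d2h))
    + trForm nf (rPlus (d2h * L) - rMinus (L * d2h))
    - trForm nh (rPlus (d2f * L) - rMinus (L * d2f))

/-- The canonical bracket `{F,H}₁(g,L)` on `𝔐`, expressed through the derivative data:
`⟨∇₁F, d₂H⟩ − ⟨∇₁H, d₂F⟩ + ⟨L, [d₂F, d₂H]⟩`. -/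
def pb1 (nf d2f nh d2h L : gl n) : ℝ :=
  trForm nf d2h - trForm nh d2f + trForm L ⁅d2f, d2h⁆

lemma Ra_apply_aux (Z : gl n) (i j : Fin n) :
    Ra Z i j = (if i < j then (1/2:ℝ) else if j < i then (-(1/2):ℝ) else 0) * Z i j := by
  simp only [Ra, upPart, lowPart, Matrix.smul_apply, Matrix.sub_apply, Matrix.of_apply,
    smul_eq_mul]
  split_ifs <;> first | omega | ring

/-- `R_a` solves the modified classical Yang–Baxter equation. -/
theorem stmt3 (n : ℕ) (X Y : gl n) :
    ⁅Ra X, Ra Y⁆ - Ra (⁅Ra X, Y⁆ + ⁅X, Ra Y⁆) = -((1/4 : ℝ) • ⁅X, Y⁆) := by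
  ext i j
  simp only [Ring.lie_def, Matrix.sub_apply, Matrix.add_apply, Matrix.neg_apply,
    Matrix.smul_apply, Matrix.mul_apply, Ra_apply_aux, smul_eq_mul, Finset.mul_sum, mul_sub,
    ← Finset.sum_sub_distrib, ← Finset.sum_add_distrib, neg_sub, ← Finset.sum_neg_distrib]
  refine Finset.sum_congr rfl fun k _ => ?_
  rcases lt_trichotomy i j with h | h | h <;>
    rcases lt_trichotomy i k with h1 | h1 | h1 <;>
    rcases lt_trichotomy k j with h2 | h2 | h2 <;>
    split_ifs <;> first | omega | (subst_vars; ring)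
end
end

section
/- For every k ≥ 1, every smooth function f : gl(n,ℝ) → ℝ, and every L ∈ gl(n,ℝ), one has {f, h_k}_2(L) = {f, h_{k+1}}_1(L), where h_k(L) = (1/k)·tr(L^k). -/
open Matrix

noncomputable section

attribute [local instance] Matrix.frobeniusNormedAddCommGroup Matrix.frobeniusNormedSpace

variable {n : ℕ}

attribute [local instance] Matrix.frobeniusNormedRing Matrix.frobeniusNormedAlgebra

lemma trForm_single (X : gl n) (i j : Fin n) :
    trForm X (Matrix.single j i 1) = X i j := by
  simp only [trForm, Matrix.trace, Matrix.diag]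
  rw [Finset.sum_eq_single i]
  · simp
  · intro b _ hb
    exact Matrix.mul_single_apply_of_ne (c := 1) j i b b hb X
  · simp

lemma trForm_nondeg {X Z : gl n} (h : ∀ Y, trForm X Y = trForm Z Y) : X = Z := by
  ext i j
  have := h (Matrix.single j i 1)
  rwa [trForm_single, trForm_single] at this

/-- The derivative of `t ↦ (L + t•Y)^m` at `t = 0`. -/
def Dm (L Y : gl n) : ℕ → gl n
  | 0 => 0
  | (m+1) => Dm L Y m * L + L ^ m * Y

lemma base_hasDerivAt (L Y : gl n) :
    HasDerivAt (fun t : ℝ => L + t • Y) Y 0 := by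
  have := ((hasDerivAt_id (0:ℝ)).smul_const Y).const_add L
  simp only [id, one_smul] at this
  exact this

lemma pow_hasDerivAt (L Y : gl n) (m : ℕ) :
    HasDerivAt (fun t : ℝ => (L + t • Y) ^ m) (Dm L Y m) 0 := by
  induction m with
  | zero => simp only [Dm, pow_zero]; exact hasDerivAt_const (0:ℝ) (1 : gl n)
  | succ m ih =>
      have := ih.mul (base_hasDerivAt L Y)
      simp only [zero_smul, add_zero] at this
      simp only [Dm, pow_succ]; exact this

lemma trace_Dm (L Y : gl n) (m : ℕ) : ∀ j : ℕ,
    (Dm L Y (m+1) * L ^ j).trace = (m+1 : ℝ) * (L ^ (m+j) * Y).trace := by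
  induction m with
  | zero =>
      intro j
      simp [Dm, Matrix.trace_mul_comm Y (L ^ j)]
  | succ m ih =>
      intro j
      have e1 : Dm L Y (m+2) * L ^ j = Dm L Y (m+1) * L ^ (j+1) + L ^ (m+1) * (Y * L ^ j) := by
        simp only [Dm]
        rw [add_mul, mul_assoc, mul_assoc, ← pow_succ']
      rw [e1, Matrix.trace_add, ih (j+1)]
      have e2 : (L ^ (m+1) * (Y * L ^ j)).trace = (L ^ (m+1+j) * Y).trace := by
        rw [Matrix.trace_mul_comm, mul_assoc, ← pow_add, Matrix.trace_mul_comm]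
        ring_nf
      rw [e2]
      have e3 : m + (j+1) = m + 1 + j := by omega
      rw [e3]
      push_cast
      ring

lemma hamH_hasDerivAt (L Y : gl n) (m : ℕ) :
    HasDerivAt (fun t : ℝ => hamH (m+1) (L + t • Y)) ((L ^ m * Y).trace) 0 := by
  have htr : HasDerivAt (fun t : ℝ => ((L + t • Y) ^ (m+1)).trace)
      ((Dm L Y (m+1)).trace) 0 := by
    have hclm := (LinearMap.toContinuousLinearMap
      (Matrix.traceLinearMap (Fin n) ℝ ℝ)).hasFDerivAt (x := (L + (0:ℝ) • Y) ^ (m+1))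
    exact (hclm.comp_hasDerivAt 0 (pow_hasDerivAt L Y (m+1)) : _)
  have hval : (Dm L Y (m+1)).trace = (m+1 : ℝ) * (L ^ m * Y).trace := by
    have := trace_Dm L Y m 0
    simpa using this
  have := htr.const_mul (1 / ((m:ℝ)+1))
  rw [hval] at this
  have hne : ((m:ℝ)+1) ≠ 0 := by positivity
  simp only [hamH]
  have hfun : (fun t : ℝ => 1 / ((m + 1 : ℕ) : ℝ) * ((L + t • Y) ^ (m + 1)).trace)
      = fun y : ℝ => 1 / ((m:ℝ) + 1) * ((L + y • Y) ^ (m + 1)).trace := by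
    funext t; push_cast; ring
  rw [hfun, show (L ^ m * Y).trace = 1 / ((m:ℝ)+1) * ((m+1 : ℝ) * (L ^ m * Y).trace) by field_simp]
  exact this

lemma grad_hamH {k : ℕ} (hk : 1 ≤ k) {dh : gl n → gl n}
    (h : IsGradient (hamH k) dh) (L : gl n) : dh L = L ^ (k-1) := by
  obtain ⟨m, rfl⟩ : ∃ m, k = m + 1 := ⟨k - 1, by omega⟩
  apply trForm_nondeg; intro Y
  have h1 := h L Y
  have h2 := hamH_hasDerivAt L Y m
  have := h1.unique h2
  rw [this]
  simp [trForm]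

lemma Rop_eq (X : gl n) : Rop X = Ra X + Rs X := by
  unfold Rop Ra Rs
  rw [show upPart X + diagPart X - lowPart X = (upPart X - lowPart X) + diagPart X by abel,
    smul_add]
  abel

lemma key (L M K : gl n) (hK : L * K = K * L) :
    trForm (L*M) (Ra K) - trForm (M*L) (Ra K) + trForm (L*M) (Rs K) - trForm (M*L) (Rs K)
      = trForm L (⁅Rop M, K⁆ + ⁅M, Rop K⁆) := by
  simp only [trForm, Ring.lie_def, Rop_eq, mul_add, mul_sub, Matrix.trace_add,
    Matrix.trace_sub]
  have c1 : (L * (Rop M * K)).trace = (L * (K * Rop M)).trace := by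
    rw [← mul_assoc, Matrix.trace_mul_comm, ← mul_assoc, ← hK, mul_assoc,
      Matrix.trace_mul_comm]
  have c2 : (L * ((Ra K + Rs K) * M)).trace = (M * L * (Ra K + Rs K)).trace := by
    rw [← mul_assoc, Matrix.trace_mul_comm, ← mul_assoc]
  have c3 : (L * (M * (Ra K + Rs K))).trace = (L * M * (Ra K + Rs K)).trace := by
    rw [mul_assoc]
  simp only [Rop_eq, mul_add, add_mul, Matrix.trace_add] at c1 c2 c3 ⊢
  linarith [c1, c2, c3]

/-- `{f, h_k}₂ = {f, h_{k+1}}₁` for the Toda Hamiltonians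
`h_k(L) = (1/k)·tr(L^k)` and every smooth `f`. -/
theorem stmt5 (n k : ℕ) (hk : 1 ≤ k) (f : gl n → ℝ) (hf : SmoothG f)
    (df dhk dhk1 : gl n → gl n)
    (hdf : IsGradient f df)
    (hdhk : IsGradient (hamH (n := n) k) dhk)
    (hdhk1 : IsGradient (hamH (n := n) (k + 1)) dhk1)
    (L : gl n) :
    quadBr df dhk L = linBr df dhk1 L := by
  have e1 := grad_hamH hk hdhk L
  have e2 := grad_hamH (show 1 ≤ k + 1 by omega) hdhk1 L
  have hpow1 : L * L ^ (k-1) = L ^ k := by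
    rw [← pow_succ']; congr 1; omega
  have hpow2 : L ^ (k-1) * L = L ^ k := by
    rw [← pow_succ]; congr 1; omega
  rw [quadBr, linBr, e1, e2, Nat.add_sub_cancel, hpow1, hpow2]
  exact key L (df L) (L ^ k) ((Commute.refl L).pow_right k).eq
end
end

section
/- Fix X ∈ gl(n,ℝ) and let f_X(L) = tr(XL). Then for every k ≥ 1 and every L ∈ gl(n,ℝ), the Hamiltonian vector fields of the Toda hierarchy are given in Lax form: {f_X, h_{k+1}}_1(L) = tr(X·[R(L^k), L]) and {f_X, h_k}_2(L) = tr(X·[R(L^k), L]), where h_k(L) = (1/k)·tr(L^k). -/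
open Matrix

noncomputable section

attribute [local instance] Matrix.frobeniusNormedAddCommGroup Matrix.frobeniusNormedSpace

variable {n : ℕ}

/-! ### Auxiliary lemmas -/

attribute [local instance] Matrix.frobeniusNormedRing Matrix.frobeniusNormedAlgebra

set_option maxHeartbeats 1000000 in
lemma aux_hasDerivAt_line (L Y : gl n) : HasDerivAt (fun t : ℝ => (L + t•Y)) Y 0 := by
  have h := ((hasDerivAt_id (0:ℝ)).smul_const Y).const_add L
  simp only [id, one_smul] at h
  exact h

set_option maxHeartbeats 1000000 in
lemma aux_hasDerivAt_pow_line (L Y : gl n) (m : ℕ) :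
    HasDerivAt (fun t : ℝ => (L + t•Y)^m)
      (∑ i ∈ Finset.range m, L^i * Y * L^(m-1-i)) 0 := by
  induction m with
  | zero =>
    simp only [pow_zero, Finset.sum_range_zero]
    exact hasDerivAt_const (0:ℝ) (1 : gl n)
  | succ m ih =>
    have h := ih.mul (aux_hasDerivAt_line L Y)
    simp only [pow_succ]
    refine h.congr_deriv (Eq.symm ?_)
    rw [Finset.sum_range_succ]
    simp only [zero_smul, add_zero, Finset.sum_mul]
    congr 1
    · apply Finset.sum_congr rfl
      intro i hi
      rw [Finset.mem_range] at hi
      simp only [show m+1-1-i = (m-1-i)+1 from by omega, pow_succ, mul_assoc]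
    · simp [Nat.sub_self]

lemma aux_hasDerivAt_trace_pow (L Y : gl n) (m : ℕ) :
    HasDerivAt (fun t : ℝ => ((L + t•Y)^m).trace)
      ((m : ℝ) * (L^(m-1) * Y).trace) 0 := by
  have hcl : HasFDerivAt (fun A : gl n => A.trace)
      (LinearMap.toContinuousLinearMap (Matrix.traceLinearMap (Fin n) ℝ ℝ)) ((L + (0:ℝ)•Y)^m) :=
    (LinearMap.toContinuousLinearMap (Matrix.traceLinearMap (Fin n) ℝ ℝ)).hasFDerivAt
  have h2 := hcl.comp_hasDerivAt 0 (aux_hasDerivAt_pow_line L Y m)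
  refine h2.congr_deriv (Eq.symm ?_)
  change (m : ℝ) * (L ^ (m - 1) * Y).trace = Matrix.trace (∑ i ∈ Finset.range m, L ^ i * Y * L ^ (m - 1 - i))
  simp only [LinearMap.coe_toContinuousLinearMap', Matrix.traceLinearMap_apply, Matrix.trace_sum]
  rw [Finset.sum_congr rfl (fun i hi => ?_), Finset.sum_const, Finset.card_range, nsmul_eq_mul]
  rw [Finset.mem_range] at hi
  rw [Matrix.trace_mul_cycle, ← pow_add, show m-1-i+i = m-1 from by omega]

lemma aux_trForm_ext {A B : gl n} (h : ∀ Y, trForm A Y = trForm B Y) : A = B := by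
  ext i j
  have := h (Matrix.single j i 1)
  simpa [trForm, Matrix.trace, Matrix.diag, Matrix.mul_apply, Matrix.single,
    ite_and, Finset.sum_ite_eq, Finset.sum_ite_eq'] using this

lemma aux_hasDerivAt_lin (X L Y : gl n) :
    HasDerivAt (fun t : ℝ => (X * (L + t • Y)).trace) ((X*Y).trace) 0 := by
  have : (fun t : ℝ => (X * (L + t • Y)).trace)
      = fun t : ℝ => (X*L).trace + t * (X*Y).trace := by
    funext t
    simp [mul_add, Matrix.mul_smul, Matrix.trace_add, Matrix.trace_smul, smul_eq_mul]
  rw [this]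
  simpa using ((hasDerivAt_id (0:ℝ)).mul_const ((X*Y).trace)).const_add ((X*L).trace)

lemma aux_grad_eq {f : gl n → ℝ} {df : gl n → gl n} (hdf : IsGradient f df) (L G : gl n)
    (hG : ∀ Y, HasDerivAt (fun t : ℝ => f (L + t • Y)) (trForm G Y) 0) : df L = G :=
  aux_trForm_ext fun Y => (hdf L Y).unique (hG Y)

lemma aux_grad_ham {k : ℕ} (hk : 1 ≤ k) {dh : gl n → gl n}
    (hdh : IsGradient (hamH (n := n) k) dh) (L : gl n) : dh L = L^(k-1) := by
  refine aux_grad_eq hdh L _ (fun Y => ?_)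
  have hknz : (k : ℝ) ≠ 0 := by positivity
  have h := (aux_hasDerivAt_trace_pow L Y k).const_mul (1/(k:ℝ))
  have he : (1/(k:ℝ)) * ((k : ℝ) * (L^(k-1) * Y).trace) = trForm (L^(k-1)) Y := by
    field_simp [trForm]
    rfl
  rw [he] at h
  exact h

lemma aux_grad_lin {X : gl n} {df : gl n → gl n}
    (hdf : IsGradient (fun L : gl n => (X * L).trace) df) (L : gl n) : df L = X :=
  aux_grad_eq hdf L X (fun Y => aux_hasDerivAt_lin X L Y)

lemma aux_Rop_eq (Z : gl n) : Rop Z = Ra Z + Rs Z := by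
  simp only [Rop, Ra, Rs]
  module

lemma aux_lin_key (A B C P L : gl n) (h : P * L = L * P) :
    (L * ((A * P - P * A) + (B * C - C * B))).trace = (B * (C * L - L * C)).trace := by
  have h1 : (L*(A*P)).trace = (L*(P*A)).trace :=
    calc (L*(A*P)).trace = (A*(L*P)).trace := by rw [Matrix.trace_mul_comm, mul_assoc, h]
      _ = (P*(A*L)).trace := by rw [← mul_assoc, Matrix.trace_mul_comm]
      _ = (L*(P*A)).trace := by rw [← mul_assoc, Matrix.trace_mul_comm]
  have h2 : (L*(B*C)).trace = (B*(C*L)).trace := by rw [Matrix.trace_mul_comm, mul_assoc]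
  have h3 : (L*(C*B)).trace = (B*(L*C)).trace := by rw [← mul_assoc, Matrix.trace_mul_comm]
  simp only [mul_add, mul_sub, Matrix.trace_add, Matrix.trace_sub]
  linarith

lemma aux_quad_key (X Ra' Rs' R L : gl n) (h : Ra' + Rs' = R) :
    ((L*X)*Ra').trace - ((X*L)*Ra').trace + ((L*X)*Rs').trace - ((X*L)*Rs').trace
      = (X*(R*L - L*R)).trace := by
  have e1 : ((L*X)*Ra').trace + ((L*X)*Rs').trace = (X*(R*L)).trace := by
    rw [← Matrix.trace_add, ← mul_add, h, Matrix.trace_mul_cycle, Matrix.trace_mul_comm]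
  have e2 : ((X*L)*Ra').trace + ((X*L)*Rs').trace = (X*(L*R)).trace := by
    rw [← Matrix.trace_add, ← mul_add, h, mul_assoc]
  simp only [mul_sub, Matrix.trace_sub]
  linarith

/-- Lax form of the Hamiltonian vector fields of the Toda hierarchy:
for `f_X(L) = tr(XL)`, `{f_X, h_{k+1}}₁(L) = tr(X·[R(L^k), L]) = {f_X, h_k}₂(L)`. -/
theorem stmt7 (n k : ℕ) (hk : 1 ≤ k) (X : gl n)
    (dfX dhk dhk1 : gl n → gl n)
    (hdfX : IsGradient (fun L : gl n => (X * L).trace) dfX)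
    (hdhk : IsGradient (hamH (n := n) k) dhk)
    (hdhk1 : IsGradient (hamH (n := n) (k + 1)) dhk1)
    (L : gl n) :
    linBr dfX dhk1 L = (X * ⁅Rop (L ^ k), L⁆).trace ∧
    quadBr dfX dhk L = (X * ⁅Rop (L ^ k), L⁆).trace := by
  have hdf : dfX L = X := aux_grad_lin hdfX L
  have hh1 : dhk1 L = L ^ k := by
    have := aux_grad_ham (k := k + 1) (by omega) hdhk1 L
    simpa using this
  have hhk : dhk L = L ^ (k - 1) := aux_grad_ham hk hdhk L
  have hcomm : L ^ k * L = L * L ^ k := by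
    rw [← pow_succ, ← pow_succ']
  have hpk : L * L ^ (k-1) = L ^ k := by
    rw [← pow_succ', show k - 1 + 1 = k from by omega]
  have hpk' : L ^ (k-1) * L = L ^ k := by
    rw [← pow_succ, show k - 1 + 1 = k from by omega]
  constructor
  · simp only [linBr, trForm, hdf, hh1, Ring.lie_def]
    exact aux_lin_key (Rop X) X (Rop (L ^ k)) (L ^ k) L hcomm
  · simp only [quadBr, trForm, hdf, hhk, hpk, hpk', Ring.lie_def]
    exact aux_quad_key X (Ra (L ^ k)) (Rs (L ^ k)) (Rop (L ^ k)) L (aux_Rop_eq (L ^ k)).symm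
end
end

section
/- The Lie derivative of the quadratic r-matrix bracket along the constant vector field V(L) = 1_n equals the linear r-matrix bracket: for all smooth functions f, h : gl(n,ℝ) → ℝ and all L ∈ gl(n,ℝ), (d/dt)|_{t=0} {f,h}_2(L + t·1_n) − {Vf, h}_2(L) − {f, Vh}_2(L) = {f,h}_1(L), where (Vf)(L) denotes the derivative of f at L in the direction of the identity matrix 1_n. -/
open Matrix

noncomputable section

attribute [local instance] Matrix.frobeniusNormedAddCommGroup Matrix.frobeniusNormedSpace

variable {n : ℕ}

attribute [local instance] Matrix.frobeniusNormedRing Matrix.frobeniusNormedAlgebra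

namespace Stmt8Aux

attribute [-instance] instTopologicalSpaceMatrix Matrix.instUniformSpace

variable {n : ℕ}

lemma trForm_sum (A B : gl n) : trForm A B = ∑ i, ∑ j, A i j * B j i := by
  simp [trForm, Matrix.trace, Matrix.diag, Matrix.mul_apply]

lemma trForm_comm (A B : gl n) : trForm A B = trForm B A := Matrix.trace_mul_comm A B

lemma trForm_mul_assoc (A B C : gl n) : trForm (A * B) C = trForm A (B * C) := by
  simp [trForm, mul_assoc]

lemma trForm_add_left (A B C : gl n) : trForm (A + B) C = trForm A C + trForm B C := by
  simp [trForm, add_mul]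

lemma trForm_add_right (A B C : gl n) : trForm A (B + C) = trForm A B + trForm A C := by
  simp [trForm, mul_add]

lemma trForm_sub_right (A B C : gl n) : trForm A (B - C) = trForm A B - trForm A C := by
  simp [trForm, mul_sub]

lemma Ra_add (X Y : gl n) : Ra (X + Y) = Ra X + Ra Y := by
  ext i j
  simp only [Ra, upPart, lowPart, Matrix.smul_apply, Matrix.sub_apply, Matrix.add_apply,
    Matrix.of_apply, smul_eq_mul]
  split_ifs <;> ring

lemma Ra_smul (c : ℝ) (X : gl n) : Ra (c • X) = c • Ra X := by
  ext i j
  simp only [Ra, upPart, lowPart, Matrix.smul_apply, Matrix.sub_apply, Matrix.of_apply,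
    smul_eq_mul]
  split_ifs <;> ring

lemma Rs_add (X Y : gl n) : Rs (X + Y) = Rs X + Rs Y := by
  ext i j
  simp only [Rs, diagPart, lowPart, Matrix.smul_apply, Matrix.add_apply, Matrix.of_apply,
    Matrix.transpose_apply, smul_eq_mul]
  split_ifs <;> ring

lemma Rs_smul (c : ℝ) (X : gl n) : Rs (c • X) = c • Rs X := by
  ext i j
  simp only [Rs, diagPart, lowPart, Matrix.smul_apply, Matrix.add_apply, Matrix.of_apply,
    Matrix.transpose_apply, smul_eq_mul]
  split_ifs <;> ring

lemma Rop_eq (X : gl n) : Rop X = Ra X + Rs X := by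
  unfold Rop Ra Rs
  module

lemma trForm_Ra (X Y : gl n) : trForm (Ra X) Y = - trForm X (Ra Y) := by
  have key : ∀ i j : Fin n, Ra X i j * Y j i + X i j * Ra Y j i = 0 := by
    intro i j
    rcases lt_trichotomy i j with hij | hij | hij
    · simp [Ra, upPart, lowPart, hij, lt_asymm hij]; ring
    · simp [Ra, upPart, lowPart, hij]
    · simp [Ra, upPart, lowPart, hij, lt_asymm hij]; ring
  have h0 : trForm (Ra X) Y + trForm X (Ra Y) = 0 := by
    rw [trForm_sum, trForm_sum, ← Finset.sum_add_distrib]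
    refine Finset.sum_eq_zero fun i _ => ?_
    rw [← Finset.sum_add_distrib]
    exact Finset.sum_eq_zero fun j _ => key i j
  linarith

lemma trForm_Rs (X Y : gl n) : trForm (Rs X) Y = trForm X (Rs Y) := by
  rw [trForm_sum, trForm_sum, Finset.sum_comm]
  refine Finset.sum_congr rfl fun a _ => Finset.sum_congr rfl fun b _ => ?_
  rcases lt_trichotomy a b with hab | hab | hab
  · simp [Rs, diagPart, lowPart, hab, lt_asymm hab, hab.ne, hab.ne']
  · simp [Rs, diagPart, lowPart, hab]; ring
  · simp [Rs, diagPart, lowPart, hab, lt_asymm hab, hab.ne, hab.ne']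

lemma trForm_basis (A : gl n) (i j : Fin n) :
    trForm A (Matrix.single j i 1) = A i j := by
  simp [trForm, Matrix.trace, Matrix.diag, Matrix.mul_apply, Matrix.single,
    ite_and]

lemma fderiv_eq_trForm {f : gl n → ℝ} {df : gl n → gl n} (hf : SmoothG f)
    (hdf : IsGradient f df) (X Y : gl n) :
    fderiv ℝ f X Y = trForm (df X) Y := by
  have hc : HasDerivAt (fun t : ℝ => X + t • Y) Y 0 := by
    simpa using ((hasDerivAt_id (0 : ℝ)).smul_const Y).const_add X
  have hX : HasFDerivAt f (fderiv ℝ f X) (X + (0 : ℝ) • Y) := by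
    simpa using (hf.differentiable (by simp) X).hasFDerivAt
  have h1 : HasDerivAt (fun t : ℝ => f (X + t • Y)) (fderiv ℝ f X Y) 0 :=
    hX.comp_hasDerivAt 0 hc
  exact h1.unique (hdf X Y)

/-- The linear map sending a functional to its gradient matrix. -/
def gradMat : ((gl n) →L[ℝ] ℝ) →ₗ[ℝ] gl n where
  toFun φ := Matrix.of fun i j => φ (Matrix.single j i 1)
  map_add' φ ψ := by ext i j; simp
  map_smul' c φ := by ext i j; simp

def gradMatL : ((gl n) →L[ℝ] ℝ) →L[ℝ] gl n :=
  LinearMap.toContinuousLinearMap gradMat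

lemma gradMatL_fderiv {f : gl n → ℝ} {df : gl n → gl n} (hf : SmoothG f)
    (hdf : IsGradient f df) (X : gl n) : gradMatL (fderiv ℝ f X) = df X := by
  ext i j
  simp [gradMatL, gradMat, LinearMap.coe_toContinuousLinearMap',
    fderiv_eq_trForm hf hdf, trForm_basis]

lemma hasDerivAt_const_add_smul_one (L : gl n) :
    HasDerivAt (fun t : ℝ => L + t • (1 : gl n)) (1 : gl n) 0 := by
  simpa using ((hasDerivAt_id (0 : ℝ)).smul_const (1 : gl n)).const_add L

lemma hasDerivAt_grad {f : gl n → ℝ} {df dVf : gl n → gl n} (hf : SmoothG f)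
    (hdf : IsGradient f df)
    (hdVf : IsGradient (fun X : gl n => trForm (df X) 1) dVf) (L : gl n) :
    HasDerivAt (fun t : ℝ => df (L + t • (1 : gl n))) (dVf L) 0 := by
  have hsm : ContDiff ℝ (⊤ : ℕ∞) (fderiv ℝ f) := hf.fderiv_right (by simp)
  have hd2 : HasFDerivAt (fderiv ℝ f) (fderiv ℝ (fderiv ℝ f) L)
      (L + (0 : ℝ) • (1 : gl n)) := by
    simpa using (hsm.differentiable (by simp) L).hasFDerivAt
  have h1 : HasDerivAt (fun t : ℝ => fderiv ℝ f (L + t • (1 : gl n)))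
      (fderiv ℝ (fderiv ℝ f) L (1 : gl n)) 0 :=
    hd2.comp_hasDerivAt 0 (hasDerivAt_const_add_smul_one L)
  have h2 : HasDerivAt (fun t : ℝ => gradMatL (fderiv ℝ f (L + t • (1 : gl n))))
      (gradMatL (fderiv ℝ (fderiv ℝ f) L (1 : gl n))) 0 :=
    gradMatL.hasFDerivAt.comp_hasDerivAt 0 h1
  have hfun : (fun t : ℝ => gradMatL (fderiv ℝ f (L + t • (1 : gl n))))
      = fun t : ℝ => df (L + t • (1 : gl n)) :=
    funext fun t => gradMatL_fderiv hf hdf _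
  have hval : gradMatL (fderiv ℝ (fderiv ℝ f) L (1 : gl n)) = dVf L := by
    ext i j
    have hsymm := second_derivative_symmetric (f := f) (f' := fderiv ℝ f)
      (f'' := fderiv ℝ (fderiv ℝ f) L) (x := L)
      (fun y => (hf.differentiable (by simp) y).hasFDerivAt)
      (by simpa using hd2) (Matrix.single j i 1) (1 : gl n)
    -- derivative of X ↦ fderiv f X 1 in a direction E
    have hd2' : HasFDerivAt (fderiv ℝ f) (fderiv ℝ (fderiv ℝ f) L) L := by simpa using hd2
    have heq : trForm (dVf L) (Matrix.single j i 1)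
        = fderiv ℝ (fderiv ℝ f) L (Matrix.single j i 1) (1 : gl n) := by
      set E := Matrix.single j i (1 : ℝ) with hE
      have hcurve : HasDerivAt (fun t : ℝ => L + t • E) E 0 := by
        simpa using ((hasDerivAt_id (0 : ℝ)).smul_const E).const_add L
      have hmid : HasDerivAt (fun t : ℝ => fderiv ℝ f (L + t • E))
          (fderiv ℝ (fderiv ℝ f) L E) 0 := by
        refine HasFDerivAt.comp_hasDerivAt 0 ?_ hcurve
        simpa using hd2'
      have happ : HasDerivAt (fun t : ℝ => fderiv ℝ f (L + t • E) (1 : gl n))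
          (fderiv ℝ (fderiv ℝ f) L E (1 : gl n)) 0 :=
        (ContinuousLinearMap.apply ℝ ℝ (1 : gl n)).hasFDerivAt.comp_hasDerivAt 0 hmid
      have hgiven := hdVf L E
      have hgiven' : HasDerivAt (fun t : ℝ => fderiv ℝ f (L + t • E) (1 : gl n))
          (trForm (dVf L) E) 0 :=
        hgiven.congr_of_eventuallyEq (Filter.Eventually.of_forall fun t =>
          fderiv_eq_trForm hf hdf _ _)
      exact hgiven'.unique happ
    calc gradMatL (fderiv ℝ (fderiv ℝ f) L (1 : gl n)) i j
        = fderiv ℝ (fderiv ℝ f) L (1 : gl n) (Matrix.single j i 1) := by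
          simp [gradMatL, gradMat, LinearMap.coe_toContinuousLinearMap']
      _ = fderiv ℝ (fderiv ℝ f) L (Matrix.single j i 1) (1 : gl n) := hsymm.symm
      _ = trForm (dVf L) (Matrix.single j i 1) := heq.symm
      _ = dVf L i j := trForm_basis _ _ _
  rw [← hfun, ← hval]
  exact h2

def RaLin : gl n →ₗ[ℝ] gl n where
  toFun := Ra
  map_add' := Ra_add
  map_smul' := Ra_smul

def RsLin : gl n →ₗ[ℝ] gl n where
  toFun := Rs
  map_add' := Rs_add
  map_smul' := Rs_smul

lemma hasDerivAt_Ra {u : ℝ → gl n} {u' : gl n} {x : ℝ} (hu : HasDerivAt u u' x) :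
    HasDerivAt (fun t => Ra (u t)) (Ra u') x := by
  simpa [RaLin, LinearMap.coe_toContinuousLinearMap', Function.comp_def] using
    (LinearMap.toContinuousLinearMap (RaLin (n := n))).hasFDerivAt.comp_hasDerivAt x hu

lemma hasDerivAt_Rs {u : ℝ → gl n} {u' : gl n} {x : ℝ} (hu : HasDerivAt u u' x) :
    HasDerivAt (fun t => Rs (u t)) (Rs u') x := by
  simpa [RsLin, LinearMap.coe_toContinuousLinearMap', Function.comp_def] using
    (LinearMap.toContinuousLinearMap (RsLin (n := n))).hasFDerivAt.comp_hasDerivAt x hu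

lemma hasDerivAt_trForm {u v : ℝ → gl n} {u' v' : gl n} {x : ℝ}
    (hu : HasDerivAt u u' x) (hv : HasDerivAt v v' x) :
    HasDerivAt (fun t => trForm (u t) (v t)) (trForm u' (v x) + trForm (u x) v') x := by
  have hm : HasDerivAt (fun t => u t * v t) (u' * v x + u x * v') x := hu.mul hv
  have htr := (LinearMap.toContinuousLinearMap
    (Matrix.traceLinearMap (Fin n) ℝ ℝ)).hasFDerivAt.comp_hasDerivAt x hm
  simpa [trForm, LinearMap.coe_toContinuousLinearMap', Function.comp_def] using htr

lemma algebra_key (L A B : gl n) :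
    trForm A (Ra (L * B)) + trForm (L * A) (Ra B) - trForm A (Ra (B * L))
      - trForm (A * L) (Ra B)
      + trForm A (Rs (B * L)) + trForm (L * A) (Rs B) - trForm A (Rs (L * B))
      - trForm (A * L) (Rs B)
      = trForm L (⁅Rop A, B⁆ + ⁅A, Rop B⁆) := by
  have e1 : trForm L (Rop A * B) = trForm (Rop A) (B * L) := by
    rw [trForm_comm, trForm_mul_assoc]
  have e2 : trForm L (B * Rop A) = trForm (Rop A) (L * B) := by
    rw [← trForm_mul_assoc, trForm_comm]
  have e3 : trForm L (A * Rop B) = trForm (L * A) (Rop B) := (trForm_mul_assoc _ _ _).symm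
  have e4 : trForm L (Rop B * A) = trForm (A * L) (Rop B) := by
    rw [trForm_comm, trForm_mul_assoc, trForm_comm]
  rw [trForm_add_right, Ring.lie_def, Ring.lie_def, trForm_sub_right, trForm_sub_right,
    e1, e2, e3, e4, Rop_eq, Rop_eq, trForm_add_left, trForm_add_left,
    trForm_add_right, trForm_add_right, trForm_Ra, trForm_Ra, trForm_Rs, trForm_Rs]
  ring

end Stmt8Aux

/-- the Lie derivative of the quadratic r-matrix bracket along the
constant vector field `V(L) = 1ₙ` is the linear r-matrix bracket. Here `Vf(L)` is
the derivative of `f` at `L` in the direction `1ₙ`, i.e. `tr(df(L)·1ₙ)`. -/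
theorem stmt8 (n : ℕ) (f h : gl n → ℝ) (hf : SmoothG f) (hh : SmoothG h)
    (df dh dVf dVh : gl n → gl n)
    (hdf : IsGradient f df) (hdh : IsGradient h dh)
    (hdVf : IsGradient (fun L : gl n => trForm (df L) 1) dVf)
    (hdVh : IsGradient (fun L : gl n => trForm (dh L) 1) dVh)
    (L : gl n) (D : ℝ)
    (hD : HasDerivAt (fun t : ℝ => quadBr df dh (L + t • (1 : gl n))) D 0) :
    D - quadBr dVf dh L - quadBr df dVh L = linBr df dh L := by
  open Stmt8Aux in
  classical
  have hA : HasDerivAt (fun t : ℝ => df (L + t • (1 : gl n))) (dVf L) 0 :=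
    hasDerivAt_grad hf hdf hdVf L
  have hB : HasDerivAt (fun t : ℝ => dh (L + t • (1 : gl n))) (dVh L) 0 :=
    hasDerivAt_grad hh hdh hdVh L
  have hc : HasDerivAt (fun t : ℝ => L + t • (1 : gl n)) (1 : gl n) 0 :=
    hasDerivAt_const_add_smul_one L
  have hbig := (((hasDerivAt_trForm (hc.mul hA) (hasDerivAt_Ra (hc.mul hB))).sub
      (hasDerivAt_trForm (hA.mul hc) (hasDerivAt_Ra (hB.mul hc)))).add
      (hasDerivAt_trForm (hc.mul hA) (hasDerivAt_Rs (hB.mul hc)))).sub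
      (hasDerivAt_trForm (hA.mul hc) (hasDerivAt_Rs (hc.mul hB)))
  unfold quadBr at hD
  have hDval := hD.unique hbig
  simp only [Pi.mul_apply, zero_smul, add_zero, one_mul, mul_one] at hDval
  rw [hDval]
  unfold quadBr linBr
  have key := algebra_key L (df L) (dh L)
  simp only [Ra_add, Rs_add, trForm_add_left, trForm_add_right] at key ⊢
  linarith [key]
end
end

section
/- Let F : GL(n,ℝ) × gl(n,ℝ) → ℝ be smooth and S-invariant. Then at every point (g,L): (i) ⟨∇₁'F(g,L), X⟩ = 0 for every upper triangular matrix X (equivalently, ∇₁'F(g,L) is strictly upper triangular), and (ii) ⟨∇₁F(g,L) + ∇₂F(g,L) − ∇₂'F(g,L), Y⟩ = 0 for every skew-symmetric matrix Y. -/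
open Matrix

noncomputable section

attribute [local instance] Matrix.frobeniusNormedAddCommGroup Matrix.frobeniusNormedSpace

variable {n : ℕ}

attribute [local instance] Matrix.frobeniusNormedRing Matrix.frobeniusNormedAlgebra

/-- Derivative of `t ↦ exp(t • X)` at `0` is `X`. -/
lemma hasDerivAt_expc (X : gl n) :
    HasDerivAt (fun t : ℝ => NormedSpace.exp (t • X)) X 0 := by
  have := hasDerivAt_exp_smul_const (𝕂 := ℝ) X (0 : ℝ)
  simp at this
  exact this

lemma exp_neg_mul_exp_self (A : gl n) :
    NormedSpace.exp (-A) * NormedSpace.exp A = 1 := by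
  rw [← Matrix.exp_add_of_commute _ _ ((Commute.refl A).neg_left), neg_add_cancel,
    NormedSpace.exp_zero]

lemma exp_mul_exp_neg_self (A : gl n) :
    NormedSpace.exp A * NormedSpace.exp (-A) = 1 := by
  rw [← Matrix.exp_add_of_commute _ _ ((Commute.refl A).neg_right), add_neg_cancel,
    NormedSpace.exp_zero]

lemma isOpen_unitSet : IsOpen {p : gl n × gl n | IsUnit p.1.det} := by
  have : {p : gl n × gl n | IsUnit p.1.det}
      = (fun p : gl n × gl n => p.1.det) ⁻¹' ({0}ᶜ) := by
    ext p; simp [isUnit_iff_ne_zero]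
  rw [this]
  exact isOpen_compl_singleton.preimage (Continuous.matrix_det continuous_fst)

/-- the infinitesimal invariance conditions (eq. (T11)) satisfied by
an `S`-invariant function `F` on `𝔐`: `∇₁'F` annihilates upper triangular matrices
(equivalently, it is strictly upper triangular), and
`⟨∇₁F + ∇₂F − ∇₂'F, Y⟩ = 0` for skew-symmetric `Y`. -/
theorem stmt9 (n : ℕ) (F : gl n × gl n → ℝ)
    (hF : SmoothOnM F) (hFinv : SInvariant F)
    (N1 N1' D2 : gl n × gl n → gl n)
    (h1 : IsGrad1 F N1) (h1' : IsGrad1' F N1') (h2 : IsGrad2 F D2)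
    (g L : gl n) (hg : IsUnit g.det) :
    (∀ X : gl n, X.BlockTriangular id → trForm (N1' (g, L)) X = 0) ∧
    (∀ i j : Fin n, j ≤ i → N1' (g, L) i j = 0) ∧
    (∀ Y : gl n, Yᵀ = -Y →
      trForm (N1 (g, L) + L * D2 (g, L) - D2 (g, L) * L) Y = 0) := by
  classical
  -- F is differentiable at (g, L)
  set φ := fderiv ℝ F (g, L) with hφdef
  have hmem : {p : gl n × gl n | IsUnit p.1.det} ∈ nhds (g, L) :=
    isOpen_unitSet.mem_nhds (by exact hg)
  have hdF : HasFDerivAt F φ (g, L) :=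
    ((hF.contDiffAt hmem).differentiableAt (by simp)).hasFDerivAt
  -- chain rule helper
  have deriv_via : ∀ (c : ℝ → gl n × gl n) (v : gl n × gl n),
      HasDerivAt c v 0 → c 0 = (g, L) →
      HasDerivAt (fun t => F (c t)) (φ v) 0 := by
    intro c v hc hc0
    have hdF' : HasFDerivAt F φ (c 0) := hc0 ▸ hdF
    exact hdF'.comp_hasDerivAt 0 hc
  -- basic directional identities
  have A1 : ∀ X : gl n, φ (X * g, 0) = trForm (N1 (g, L)) X := by
    intro X
    have hc : HasDerivAt (fun t : ℝ => ((NormedSpace.exp (t • X) * g, L) : gl n × gl n))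
        (X * g, 0) 0 := ((hasDerivAt_expc X).mul_const g).prodMk (hasDerivAt_const 0 L)
    exact (deriv_via _ _ hc (by simp [NormedSpace.exp_zero])).unique (h1 g L hg X)
  have A1' : ∀ X : gl n, φ (g * X, 0) = trForm (N1' (g, L)) X := by
    intro X
    have hc : HasDerivAt (fun t : ℝ => ((g * NormedSpace.exp (t • X), L) : gl n × gl n))
        (g * X, 0) 0 := ((hasDerivAt_expc X).const_mul g).prodMk (hasDerivAt_const 0 L)
    exact (deriv_via _ _ hc (by simp [NormedSpace.exp_zero])).unique (h1' g L hg X)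
  have A2 : ∀ W : gl n, φ (0, W) = trForm (D2 (g, L)) W := by
    intro W
    have hW : HasDerivAt (fun t : ℝ => L + t • W) W 0 := by
      have := ((hasDerivAt_id (0 : ℝ)).smul_const W).const_add L
      rw [one_smul] at this
      exact this
    have hc : HasDerivAt (fun t : ℝ => ((g, L + t • W) : gl n × gl n)) (0, W) 0 :=
      (hasDerivAt_const 0 g).prodMk hW
    exact (deriv_via _ _ hc (by simp)).unique (h2 g L hg W)
  -- Part (i), first form
  have key1 : ∀ X : gl n, X.BlockTriangular id → trForm (N1' (g, L)) X = 0 := by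
    intro X hX
    -- eventually, 1 + t•X has unit determinant and positive diagonal
    have hdet : ∀ᶠ t : ℝ in nhds 0, IsUnit ((1 + t • X : gl n)).det := by
      have hcont : Continuous fun t : ℝ => ((1 + t • X : gl n)).det :=
        (continuous_const.add (continuous_id.smul continuous_const)).matrix_det
      have h0 : ((1 + (0:ℝ) • X : gl n)).det ≠ 0 := by simp
      filter_upwards [hcont.continuousAt.eventually_ne h0] with t ht
      exact isUnit_iff_ne_zero.mpr ht
    have hdiag : ∀ᶠ t : ℝ in nhds 0, ∀ i, 0 < ((1 + t • X : gl n)) i i := by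
      rw [Filter.eventually_all]
      intro i
      have hcont : Continuous fun t : ℝ => ((1 + t • X : gl n)) i i := by
        simp only [Matrix.add_apply, Matrix.smul_apply, smul_eq_mul]
        exact continuous_const.add (continuous_id.mul continuous_const)
      have : Filter.Tendsto (fun t : ℝ => ((1 + t • X : gl n)) i i) (nhds 0)
          (nhds (((1 + (0:ℝ) • X : gl n)) i i)) := hcont.continuousAt
      have h1pos : (0:ℝ) < ((1 + (0:ℝ) • X : gl n)) i i := by simp
      exact this.eventually (eventually_gt_nhds h1pos)
    have heq : (fun t : ℝ => F (g + t • (g * X), L)) =ᶠ[nhds 0] fun _ => F (g, L) := by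
      filter_upwards [hdet, hdiag] with t ht hd
      set M : gl n := 1 + t • X with hM
      have hMtri : M.BlockTriangular id :=
        Matrix.blockTriangular_one.add (fun i j h => by
          simp [Matrix.smul_apply, hX h])
      haveI : Invertible M := M.invertibleOfIsUnitDet ht
      have hMinvtri : M⁻¹.BlockTriangular id :=
        Matrix.blockTriangular_inv_of_blockTriangular hMtri
      have hdiaginv : ∀ i, M⁻¹ i i = (M i i)⁻¹ := by
        intro i
        have he1 : (M⁻¹ * M) i i = 1 := by
          rw [Matrix.nonsing_inv_mul M ht]; simp
        have he2 : (M⁻¹ * M) i i = M⁻¹ i i * M i i := by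
          rw [Matrix.mul_apply]
          apply Finset.sum_eq_single i
          · intro j _ hji
            rcases hji.lt_or_gt with h | h
            · rw [hMinvtri (show id j < id i from h), zero_mul]
            · rw [hMtri (show id i < id j from h), mul_zero]
          · intro h; exact absurd (Finset.mem_univ i) h
        exact eq_inv_of_mul_eq_one_left (by rw [← he2, he1])
      have hInB : InB M⁻¹ :=
        ⟨hMinvtri, fun i => by rw [hdiaginv i]; exact inv_pos.mpr (hd i)⟩
      have horth1 : IsOrth (1 : gl n) := by simp [IsOrth]
      have := hFinv 1 M⁻¹ g L horth1 hInB hg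
      rw [Matrix.nonsing_inv_nonsing_inv M ht, inv_one] at this
      simp only [one_mul, mul_one] at this
      have hgM : g * M = g + t • (g * X) := by
        rw [hM, mul_add, mul_one, Matrix.mul_smul]
      rw [hgM] at this
      exact this
    have hzero : HasDerivAt (fun t : ℝ => F (g + t • (g * X), L)) 0 0 :=
      (hasDerivAt_const (0:ℝ) (F (g, L))).congr_of_eventuallyEq heq
    have hline : HasDerivAt (fun t : ℝ => ((g + t • (g * X), L) : gl n × gl n))
        (g * X, 0) 0 := by
      refine HasDerivAt.prodMk ?_ (hasDerivAt_const 0 L)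
      simpa using ((hasDerivAt_id (0 : ℝ)).smul_const (g * X)).const_add g
    have hphi : HasDerivAt (fun t : ℝ => F (g + t • (g * X), L)) (φ (g * X, 0)) 0 :=
      deriv_via _ _ hline (by simp)
    rw [← A1' X]
    exact hphi.unique hzero
  refine ⟨key1, ?_, ?_⟩
  · -- entrywise version
    intro i j hij
    have htri : (Matrix.single j i (1:ℝ)).BlockTriangular id :=
      Matrix.blockTriangular_single (show id j ≤ id i from hij) 1
    have := key1 _ htri
    have htr : trForm (N1' (g, L)) (Matrix.single j i (1:ℝ)) = N1' (g, L) i j := by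
      simp only [trForm, Matrix.trace, Matrix.diag]
      rw [Finset.sum_eq_single i]
      · simp
      · intro p _ hpi
        rw [Matrix.mul_single_apply_of_ne _ _ _ _ _ hpi]
      · intro h; exact absurd (Finset.mem_univ i) h
    rw [htr] at this
    exact this
  · -- Part (ii)
    intro Y hY
    have hexpT : ∀ t : ℝ, (NormedSpace.exp (t • Y))ᵀ = NormedSpace.exp (-(t • Y)) := by
      intro t
      rw [← Matrix.exp_transpose]
      congr 1
      rw [Matrix.transpose_smul, hY, smul_neg]
    have horth : ∀ t : ℝ, IsOrth (NormedSpace.exp (t • Y)) := by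
      intro t
      unfold IsOrth
      rw [hexpT t]
      exact exp_neg_mul_exp_self _
    have hinv : ∀ t : ℝ, (NormedSpace.exp (t • Y))⁻¹ = NormedSpace.exp (t • (-Y)) := by
      intro t
      apply Matrix.inv_eq_right_inv
      rw [smul_neg]
      exact exp_mul_exp_neg_self _
    have hconstf : ∀ t : ℝ,
        F (NormedSpace.exp (t • Y) * g,
          NormedSpace.exp (t • Y) * L * NormedSpace.exp (t • (-Y))) = F (g, L) := by
      intro t
      have hInB1 : InB (1 : gl n) := ⟨Matrix.blockTriangular_one, fun i => by simp⟩
      have := hFinv (NormedSpace.exp (t • Y)) 1 g L (horth t) hInB1 hg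
      rw [inv_one, mul_one, hinv t] at this
      exact this
    have hc : HasDerivAt (fun t : ℝ =>
        ((NormedSpace.exp (t • Y) * g,
          NormedSpace.exp (t • Y) * L * NormedSpace.exp (t • (-Y))) : gl n × gl n))
        (Y * g, Y * L - L * Y) 0 := by
      refine HasDerivAt.prodMk ((hasDerivAt_expc Y).mul_const g) ?_
      have := ((hasDerivAt_expc Y).mul_const L).mul (hasDerivAt_expc (-Y))
      simp [NormedSpace.exp_zero, sub_eq_add_neg, mul_neg] at this ⊢
      exact this
    have hder : HasDerivAt (fun t : ℝ =>
        F (NormedSpace.exp (t • Y) * g,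
          NormedSpace.exp (t • Y) * L * NormedSpace.exp (t • (-Y))))
        (φ (Y * g, Y * L - L * Y)) 0 :=
      deriv_via _ _ hc (by simp [NormedSpace.exp_zero])
    have hzero : HasDerivAt (fun t : ℝ =>
        F (NormedSpace.exp (t • Y) * g,
          NormedSpace.exp (t • Y) * L * NormedSpace.exp (t • (-Y)))) 0 0 := by
      have hfun : (fun t : ℝ =>
          F (NormedSpace.exp (t • Y) * g,
            NormedSpace.exp (t • Y) * L * NormedSpace.exp (t • (-Y))))
          = fun _ => F (g, L) := funext hconstf
      rw [hfun]
      exact hasDerivAt_const 0 _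
    have h0 : φ (Y * g, Y * L - L * Y) = 0 := hder.unique hzero
    have hsplit : ((Y * g, Y * L - L * Y) : gl n × gl n)
        = (Y * g, 0) + (0, Y * L - L * Y) := by
      simp
    rw [hsplit, map_add, A1 Y, A2 (Y * L - L * Y)] at h0
    have hcyc : ((D2 (g, L)) * (Y * L)).trace = (L * (D2 (g, L) * Y)).trace := by
      rw [← Matrix.mul_assoc, Matrix.trace_mul_cycle, Matrix.mul_assoc]
    simp only [trForm, Matrix.add_mul, Matrix.sub_mul, Matrix.mul_sub, Matrix.trace_add,
      Matrix.trace_sub, Matrix.mul_assoc] at h0 ⊢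
    linarith [hcyc, h0]
end
end

section
/- Let F, H : GL(n,ℝ) × gl(n,ℝ) → ℝ be smooth and S-invariant. Then at every (g,L), ⟨R_a∇₁'F(g,L), ∇₁'H(g,L)⟩ = 0, where R_a(X) = ½(X_> − X_<). -/
open Matrix

noncomputable section

attribute [local instance] Matrix.frobeniusNormedAddCommGroup Matrix.frobeniusNormedSpace

variable {n : ℕ}

/-! ### Auxiliary lemmas for stmt11 -/

attribute [local instance] Matrix.frobeniusNormedRing Matrix.frobeniusNormedAlgebra

lemma exp_sq_zero_aux (x : gl n) (hx : x * x = 0) : NormedSpace.exp x = 1 + x := by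
  rw [show NormedSpace.exp x = ∑' m : ℕ, ((m.factorial : ℝ))⁻¹ • x ^ m from
    congrFun (NormedSpace.exp_eq_tsum ℝ) x]
  rw [tsum_eq_sum (s := ({0, 1} : Finset ℕ)) ?_]
  · norm_num [Finset.sum_pair, Nat.factorial]
  · intro b hb
    simp only [Finset.mem_insert, Finset.mem_singleton] at hb
    obtain ⟨m, rfl⟩ : ∃ m, b = m + 2 := ⟨b - 2, by omega⟩
    rw [pow_add, pow_two, hx, mul_zero, smul_zero]

lemma exp_idem_aux (x : gl n) (hx : x * x = x) (t : ℝ) :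
    NormedSpace.exp (t • x) = 1 + (Real.exp t - 1) • x := by
  have hpow : ∀ m : ℕ, x ^ (m + 1) = x := by
    intro m
    induction m with
    | zero => simp
    | succ k ih => rw [pow_succ, ih, hx]
  have hsum : Summable fun m : ℕ => ((m.factorial : ℝ))⁻¹ • (t • x) ^ m :=
    NormedSpace.expSeries_summable' (𝕂 := ℝ) (t • x)
  rw [show NormedSpace.exp (t • x) = ∑' m : ℕ, ((m.factorial : ℝ))⁻¹ • (t • x) ^ m from
    congrFun (NormedSpace.exp_eq_tsum ℝ) (t • x)]
  rw [Summable.tsum_eq_zero_add hsum]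
  have h1 : ∀ m : ℕ, (((m + 1).factorial : ℝ))⁻¹ • (t • x) ^ (m + 1)
      = (t ^ (m + 1) / ((m + 1).factorial : ℝ)) • x := by
    intro m
    rw [smul_pow, hpow, smul_smul]
    ring_nf
  have h3 : ∑' m : ℕ, t ^ (m + 1) / (((m + 1).factorial : ℕ) : ℝ) = Real.exp t - 1 := by
    have he : Real.exp t = ∑' m : ℕ, t ^ m / (m.factorial : ℝ) := by
      rw [Real.exp_eq_exp_ℝ]
      exact congrFun NormedSpace.exp_eq_tsum_div t
    rw [Summable.tsum_eq_zero_add (Real.summable_pow_div_factorial t)] at he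
    simp only [pow_zero, Nat.factorial_zero, Nat.cast_one, div_one] at he
    linarith
  calc ((Nat.factorial 0 : ℝ))⁻¹ • (t • x) ^ 0
        + ∑' m : ℕ, (((m + 1).factorial : ℝ))⁻¹ • (t • x) ^ (m + 1)
      = 1 + ∑' m : ℕ, (t ^ (m + 1) / (((m + 1).factorial : ℕ) : ℝ)) • x := by
        simp only [h1]; norm_num
    _ = 1 + (∑' m : ℕ, t ^ (m + 1) / (((m + 1).factorial : ℕ) : ℝ)) • x := by
        rw [Summable.tsum_smul_const]
        exact (Real.summable_pow_div_factorial t).comp_injective (add_left_injective 1)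
    _ = 1 + (Real.exp t - 1) • x := by rw [h3]

lemma mul_idem_expand (E : gl n) (hEE : E * E = E) (u v : ℝ) :
    ((1 : gl n) + u • E) * (1 + v • E) = 1 + (u + v + u * v) • E := by
  simp only [mul_add, add_mul, one_mul, mul_one, smul_mul_assoc, mul_smul_comm, smul_smul,
    hEE, add_smul, smul_add]
  module

lemma grad1'_lower_zero (F : gl n × gl n → ℝ) (hFinv : SInvariant F)
    (N : gl n × gl n → gl n) (hN : IsGrad1' F N) (g L : gl n) (hg : IsUnit g.det)
    {i j : Fin n} (hij : i ≤ j) : N (g, L) j i = 0 := by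
  have horth : IsOrth (1 : gl n) := by simp [IsOrth]
  -- `F (g * exp (t • E), L)` is constant in `t`
  have hconst : ∀ t : ℝ,
      F (g * NormedSpace.exp (t • Matrix.single i j (1 : ℝ)), L) = F (g, L) := by
    intro t
    rcases eq_or_lt_of_le hij with heq | hlt
    · -- diagonal case : i = j
      subst heq
      have hEE : Matrix.single i i (1 : ℝ) * Matrix.single i i (1 : ℝ)
          = Matrix.single i i (1 : ℝ) := by
        rw [Matrix.single_mul_single_same, one_mul]
      have hexp : NormedSpace.exp (t • Matrix.single i i (1 : ℝ))
          = 1 + (Real.exp t - 1) • Matrix.single i i (1 : ℝ) := exp_idem_aux _ hEE t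
      have hc : (Real.exp (-t) - 1) + (Real.exp t - 1)
          + (Real.exp (-t) - 1) * (Real.exp t - 1) = 0 := by
        have h1 : Real.exp (-t) * Real.exp t = 1 := by
          rw [← Real.exp_add]; simp
        nlinarith [h1]
      have hinv : ((1 : gl n) + (Real.exp (-t) - 1) • Matrix.single i i (1 : ℝ))
          * (1 + (Real.exp t - 1) • Matrix.single i i (1 : ℝ)) = 1 := by
        rw [mul_idem_expand _ hEE, hc, zero_smul, add_zero]
      have hinB : InB ((1 : gl n) + (Real.exp (-t) - 1) • Matrix.single i i (1 : ℝ)) := by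
        constructor
        · intro k l hkl
          have h1 : l < k := hkl
          have hE0 : ∀ c : ℝ, Matrix.single i i c k l = 0 := by
            intro c
            apply Matrix.single_apply_of_ne
            rintro ⟨rfl, rfl⟩
            exact absurd h1 (lt_irrefl _)
          simp [Matrix.add_apply, Matrix.smul_apply, Matrix.one_apply_ne (ne_of_gt h1), hE0]
        · intro k
          simp only [Matrix.add_apply, Matrix.smul_apply, smul_eq_mul, Matrix.one_apply_eq]
          rcases eq_or_ne i k with rfl | hik
          · rw [Matrix.single_apply_same]
            have := Real.exp_pos (-t)
            nlinarith
          · have hE0 : ∀ c : ℝ, Matrix.single i i c k k = 0 := by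
              intro c
              apply Matrix.single_apply_of_ne
              rintro ⟨rfl, -⟩
              exact hik rfl
            simp [hE0]
      have hFi := hFinv 1 _ g L horth hinB hg
      rw [Matrix.inv_eq_right_inv hinv] at hFi
      rw [hexp]
      have h1inv : (1 : gl n)⁻¹ = 1 := Matrix.inv_eq_right_inv (by simp)
      simpa [h1inv] using hFi
    · -- strict case : i < j
      have hEE : Matrix.single i j (1 : ℝ) * Matrix.single i j (1 : ℝ) = 0 :=
        by simp [hlt.ne']
      have hEE' : (t • Matrix.single i j (1 : ℝ)) * (t • Matrix.single i j (1 : ℝ))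
          = 0 := by
        rw [smul_mul_assoc, mul_smul_comm, hEE, smul_zero, smul_zero]
      have hexp : NormedSpace.exp (t • Matrix.single i j (1 : ℝ))
          = 1 + t • Matrix.single i j (1 : ℝ) := exp_sq_zero_aux _ hEE'
      have hinv : ((1 : gl n) - t • Matrix.single i j (1 : ℝ))
          * (1 + t • Matrix.single i j (1 : ℝ)) = 1 := by
        have h2 : ((1 : gl n) - t • Matrix.single i j (1 : ℝ))
            = 1 + (-t) • Matrix.single i j (1 : ℝ) := by
          rw [neg_smul, ← sub_eq_add_neg]
        rw [h2, add_mul, one_mul, mul_add, mul_one, smul_mul_assoc, mul_smul_comm, hEE,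
          smul_zero, smul_zero, add_zero, neg_smul]
        abel
      have hinB : InB ((1 : gl n) - t • Matrix.single i j (1 : ℝ)) := by
        constructor
        · intro k l hkl
          have h1 : l < k := hkl
          have hE0 : ∀ c : ℝ, Matrix.single i j c k l = 0 := by
            intro c
            apply Matrix.single_apply_of_ne
            rintro ⟨rfl, rfl⟩
            exact absurd hlt (not_lt.mpr h1.le)
          simp [Matrix.sub_apply, Matrix.smul_apply, Matrix.one_apply_ne (ne_of_gt h1), hE0]
        · intro k
          have hE0 : ∀ c : ℝ, Matrix.single i j c k k = 0 := by
            intro c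
            apply Matrix.single_apply_of_ne
            rintro ⟨rfl, h2⟩
            exact absurd h2 (ne_of_gt hlt)
          simp [Matrix.sub_apply, Matrix.smul_apply, Matrix.one_apply_eq, hE0]
      have hFi := hFinv 1 _ g L horth hinB hg
      rw [Matrix.inv_eq_right_inv hinv] at hFi
      rw [hexp]
      have h1inv : (1 : gl n)⁻¹ = 1 := Matrix.inv_eq_right_inv (by simp)
      simpa [h1inv] using hFi
  have hd := hN g L hg (Matrix.single i j (1 : ℝ))
  have hfun : (fun t : ℝ => F (g * NormedSpace.exp (t • Matrix.single i j (1 : ℝ)), L))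
      = fun _ => F (g, L) := funext hconst
  rw [hfun] at hd
  have hzero : trForm (N (g, L)) (Matrix.single i j (1 : ℝ)) = 0 :=
    hd.unique (hasDerivAt_const 0 _)
  have htr : trForm (N (g, L)) (Matrix.single i j (1 : ℝ)) = N (g, L) j i := by
    simp only [trForm, Matrix.trace, Matrix.diag, Matrix.mul_apply, Matrix.single,
      Matrix.of_apply, mul_ite, mul_one, mul_zero, ite_and]
    rw [Finset.sum_comm]
    simp [Finset.sum_ite_eq]
  rw [htr] at hzero
  exact hzero


/-- for `S`-invariant `F, H`, `⟨R_a∇₁'F, ∇₁'H⟩ = 0` (eq. (T12)). -/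
theorem stmt11 (n : ℕ) (F H : gl n × gl n → ℝ)
    (hF : SmoothOnM F) (hH : SmoothOnM H)
    (hFinv : SInvariant F) (hHinv : SInvariant H)
    (NF' NH' : gl n × gl n → gl n)
    (hNF' : IsGrad1' F NF') (hNH' : IsGrad1' H NH')
    (g L : gl n) (hg : IsUnit g.det) :
    trForm (Ra (NF' (g, L))) (NH' (g, L)) = 0 := by
  have hFz : ∀ i j : Fin n, i ≤ j → NF' (g, L) j i = 0 :=
    fun i j h => grad1'_lower_zero F hFinv NF' hNF' g L hg h
  have hHz : ∀ i j : Fin n, i ≤ j → NH' (g, L) j i = 0 :=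
    fun i j h => grad1'_lower_zero H hHinv NH' hNH' g L hg h
  rw [trForm, Matrix.trace]
  apply Finset.sum_eq_zero
  intro k _
  rw [Matrix.diag_apply, Matrix.mul_apply]
  apply Finset.sum_eq_zero
  intro l _
  rcases lt_trichotomy k l with h | h | h
  · rw [hHz k l h.le, mul_zero]
  · subst h
    have hz : Ra (NF' (g, L)) k k = 0 := by
      simp [Ra, upPart, lowPart]
    rw [hz, zero_mul]
  · have hz : Ra (NF' (g, L)) k l = 0 := by
      simp [Ra, upPart, lowPart, not_lt.mpr h.le, h, hFz l k h.le]
    rw [hz, zero_mul]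
end
end
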